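/- arXiv:2103.07846 — 9 statements merged into one kernel-verified Lean document; each statement's English description precedes it below -/
import Mathlib

section
/- Let E[k+1] = E[k] + Δt·η_c·P_c[k] − (Δt/η_d)·P_d[k] with E[0]=E_0, and let E^r be defined by the same recursion with inputs P_c^r, P_d^r. If for every k, P_c[k]−P_d[k] = P_c^r[k]−P_d^r[k], P_c[k]·P_d[k]=0, all inputs are nonnegative, Δt>0, and 0<η_c≤1≤1/η_d (i.e., η_c,η_d∈(0,1]), then E^r[k] ≤ E[k] for all k. -/
/-!
Both trajectories start at `E0`, so it suffices to compare one step. Writing `δ = Pdr - Pd`, equal net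
power gives `Pcr = Pc + δ`, and complementarity forces `δ ≥ 0`: either `Pc = 0` and `δ = Pcr`, or
`Pd = 0` and `δ = Pdr`. The relaxed step therefore differs from the exact one by
`Δt (ηc - 1/ηd) δ ≤ 0`, the energy lost by pushing `δ` through the battery and back.
-/

theorem le_of_sub_eq_sub_of_mul_eq_zero {c d cr dr : ℝ} (hnet : c - d = cr - dr) (hcomp : c * d = 0)
    (hcr : 0 ≤ cr) (hdr : 0 ≤ dr) : d ≤ dr := by
  rcases mul_eq_zero.mp hcomp with hc | hd
  · linarith
  · linarith

theorem mul_sub_mul_le_of_sub_eq_sub {a b c d cr dr : ℝ} (hab : a ≤ b) (hnet : c - d = cr - dr)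
    (hd : d ≤ dr) : a * cr - b * dr ≤ a * c - b * d := by
  have hcr : cr = c + (dr - d) := by linarith
  rw [hcr]
  nlinarith [mul_le_mul_of_nonneg_right hab (sub_nonneg.mpr hd)]

theorem le_of_le_increment {x y u v : ℕ → ℝ} (h0 : x 0 ≤ y 0) (huv : ∀ k, u k ≤ v k)
    (hx : ∀ k, x (k + 1) = x k + u k) (hy : ∀ k, y (k + 1) = y k + v k) : ∀ k, x k ≤ y k := by
  intro k
  induction k with
  | zero => exact h0
  | succ k ih => rw [hx, hy]; exact add_le_add ih (huv k)

theorem mul_le_div_of_le_one {t a b : ℝ} (ht : 0 ≤ t) (ha : a ≤ 1) (hb : 0 < b) (hb1 : b ≤ 1) :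
    t * a ≤ t / b := by
  rw [div_eq_mul_one_div]
  exact mul_le_mul_of_nonneg_left (ha.trans (one_le_one_div hb hb1)) ht

theorem relaxed_le_exact_general
    (Δt ηc ηd E0 : ℝ) (Pc Pd Pcr Pdr E Er : ℕ → ℝ)
    (hΔt : 0 < Δt) (hηc1 : ηc ≤ 1)
    (hηd : 0 < ηd) (hηd1 : ηd ≤ 1)
    (hnet : ∀ k, Pc k - Pd k = Pcr k - Pdr k)
    (hcomp : ∀ k, Pc k * Pd k = 0)
    (hPcr : ∀ k, 0 ≤ Pcr k) (hPdr : ∀ k, 0 ≤ Pdr k)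
    (hE0 : E 0 = E0) (hEr0 : Er 0 = E0)
    (hE : ∀ k, E (k+1) = E k + Δt * ηc * Pc k - (Δt / ηd) * Pd k)
    (hEr : ∀ k, Er (k+1) = Er k + Δt * ηc * Pcr k - (Δt / ηd) * Pdr k) :
    ∀ k, Er k ≤ E k := by
  have hgain : Δt * ηc ≤ Δt / ηd := mul_le_div_of_le_one hΔt.le hηc1 hηd hηd1
  have hstep : ∀ k, Δt * ηc * Pcr k - Δt / ηd * Pdr k ≤ Δt * ηc * Pc k - Δt / ηd * Pd k :=
    fun k ↦ mul_sub_mul_le_of_sub_eq_sub hgain (hnet k)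
      (le_of_sub_eq_sub_of_mul_eq_zero (hnet k) (hcomp k) (hPcr k) (hPdr k))
  refine le_of_le_increment (hE0.trans hEr0.symm).ge hstep (fun k ↦ ?_) (fun k ↦ ?_)
  · rw [hEr, add_sub_assoc]
  · rw [hE, add_sub_assoc]

/-- Relaxed trajectory underestimates the exact trajectory. -/
theorem relaxed_le_exact
    (Δt ηc ηd E0 : ℝ) (Pc Pd Pcr Pdr E Er : ℕ → ℝ)
    (hΔt : 0 < Δt) (hηc : 0 < ηc) (hηc1 : ηc ≤ 1)
    (hηd : 0 < ηd) (hηd1 : ηd ≤ 1)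
    (hnet : ∀ k, Pc k - Pd k = Pcr k - Pdr k)
    (hcomp : ∀ k, Pc k * Pd k = 0)
    (hPc : ∀ k, 0 ≤ Pc k) (hPd : ∀ k, 0 ≤ Pd k)
    (hPcr : ∀ k, 0 ≤ Pcr k) (hPdr : ∀ k, 0 ≤ Pdr k)
    (hE0 : E 0 = E0) (hEr0 : Er 0 = E0)
    (hE : ∀ k, E (k+1) = E k + Δt * ηc * Pc k - (Δt / ηd) * Pd k)
    (hEr : ∀ k, Er (k+1) = Er k + Δt * ηc * Pcr k - (Δt / ηd) * Pdr k) :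
    ∀ k, Er k ≤ E k :=
  relaxed_le_exact_general Δt ηc ηd E0 Pc Pd Pcr Pdr E Er hΔt hηc1 hηd hηd1 hnet hcomp hPcr hPdr hE0
    hEr0 hE hEr
end

section
/- Under the hypotheses of the two previous orderings combined (same net power, complementarity for the exact inputs, nonnegative inputs, Δt>0, η_c ≤ η ≤ 1/η_d with η_c,η_d∈(0,1]), the three SoC trajectories are ordered: E^r[k] ≤ E[k] ≤ E^s[k] for all k ∈ {0,…,T}. -/
/-!
With `a = Δt ηc`, `e = η Δt` and `b = Δt / ηd` we have `a ≤ e ≤ b`, and the three models add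
`a c - b d` (relaxed and exact) and `e (c - d)` (simplified) to the SoC at each step, where the
net input `c - d` is common to all three. For a fixed net input, `a c - b d` decreases in the
charging power `c`, and complementarity makes the exact charging power the least one possible;
so the relaxed increment is at most the exact one. The exact increment is `a c` or `-b d`, which
lies below `e c` or `-e d` respectively. Summing the increments from the common initial SoC
orders the trajectories.
-/

theorem le_of_sub_succ_le {α : Type*} [AddCommGroup α] [PartialOrder α] [IsOrderedAddMonoid α]
    {x y : ℕ → α} (h0 : x 0 ≤ y 0) (h : ∀ k, x (k + 1) - x k ≤ y (k + 1) - y k) (k : ℕ) :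
    x k ≤ y k := by
  have hmono : Monotone (y - x) := monotone_nat_of_le_succ fun n => by
    simpa only [Pi.sub_apply, sub_le_sub_iff, add_comm] using h n
  simpa only [Pi.sub_apply, sub_nonneg] using (sub_nonneg.2 h0).trans (hmono (Nat.zero_le k))

theorem le_of_mul_eq_zero_of_sub_eq_sub {c d c' d' : ℝ} (hcd : c * d = 0)
    (hc' : 0 ≤ c') (hd' : 0 ≤ d') (hnet : c - d = c' - d') : c ≤ c' := by
  rcases mul_eq_zero.mp hcd with hc | hd <;> linarith

theorem sub_mul_le_sub_mul_of_sub_eq_sub {a b c d c' d' : ℝ} (hab : a ≤ b) (hc : c ≤ c')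
    (hnet : c - d = c' - d') : a * c' - b * d' ≤ a * c - b * d := by
  have hgap : 0 ≤ (b - a) * (c' - c) := mul_nonneg (sub_nonneg.2 hab) (sub_nonneg.2 hc)
  linear_combination hgap - b * hnet

theorem mul_sub_mul_le_mul_sub {a b e c d : ℝ} (hae : a ≤ e) (heb : e ≤ b) (hc : 0 ≤ c)
    (hd : 0 ≤ d) (hcd : c * d = 0) : a * c - b * d ≤ e * (c - d) := by
  rcases mul_eq_zero.mp hcd with rfl | rfl <;> nlinarith

theorem trajectories_ordered_general
    (Δt ηc ηd η E0 : ℝ) (T : ℕ) (Pc Pd Pcr Pdr E Er Es : ℕ → ℝ)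
    (hΔt : 0 < Δt)
    (hη1 : ηc ≤ η) (hη2 : η ≤ 1 / ηd)
    (hnet : ∀ k, Pc k - Pd k = Pcr k - Pdr k)
    (hcomp : ∀ k, Pc k * Pd k = 0)
    (hPc : ∀ k, 0 ≤ Pc k) (hPd : ∀ k, 0 ≤ Pd k)
    (hPcr : ∀ k, 0 ≤ Pcr k) (hPdr : ∀ k, 0 ≤ Pdr k)
    (hE0 : E 0 = E0) (hEr0 : Er 0 = E0) (hEs0 : Es 0 = E0)
    (hE : ∀ k, E (k+1) = E k + Δt * ηc * Pc k - (Δt / ηd) * Pd k)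
    (hEr : ∀ k, Er (k+1) = Er k + Δt * ηc * Pcr k - (Δt / ηd) * Pdr k)
    (hEs : ∀ k, Es (k+1) = Es k + η * Δt * (Pc k - Pd k)) :
    ∀ k ≤ T, Er k ≤ E k ∧ E k ≤ Es k := by
  have hae : Δt * ηc ≤ η * Δt := by nlinarith
  have heb : η * Δt ≤ Δt / ηd := by
    rw [div_eq_mul_one_div, mul_comm η]
    exact mul_le_mul_of_nonneg_left hη2 hΔt.le
  refine fun k _ => ⟨le_of_sub_succ_le (hEr0.trans hE0.symm).le (fun n => ?_) k,
    le_of_sub_succ_le (hE0.trans hEs0.symm).le (fun n => ?_) k⟩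
  · have hcharge := le_of_mul_eq_zero_of_sub_eq_sub (hcomp n) (hPcr n) (hPdr n) (hnet n)
    linarith [hE n, hEr n, sub_mul_le_sub_mul_of_sub_eq_sub (hae.trans heb) hcharge (hnet n)]
  · linarith [hE n, hEs n, mul_sub_mul_le_mul_sub hae heb (hPc n) (hPd n) (hcomp n)]

/-- Ordering of the relaxed, exact, and simplified SoC trajectories. -/
theorem trajectories_ordered
    (Δt ηc ηd η E0 : ℝ) (T : ℕ) (Pc Pd Pcr Pdr E Er Es : ℕ → ℝ)
    (hΔt : 0 < Δt) (hηc : 0 < ηc) (hηc1 : ηc ≤ 1)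
    (hηd : 0 < ηd) (hηd1 : ηd ≤ 1)
    (hη1 : ηc ≤ η) (hη2 : η ≤ 1 / ηd)
    (hnet : ∀ k, Pc k - Pd k = Pcr k - Pdr k)
    (hcomp : ∀ k, Pc k * Pd k = 0)
    (hPc : ∀ k, 0 ≤ Pc k) (hPd : ∀ k, 0 ≤ Pd k)
    (hPcr : ∀ k, 0 ≤ Pcr k) (hPdr : ∀ k, 0 ≤ Pdr k)
    (hE0 : E 0 = E0) (hEr0 : Er 0 = E0) (hEs0 : Es 0 = E0)
    (hE : ∀ k, E (k+1) = E k + Δt * ηc * Pc k - (Δt / ηd) * Pd k)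
    (hEr : ∀ k, Er (k+1) = Er k + Δt * ηc * Pcr k - (Δt / ηd) * Pdr k)
    (hEs : ∀ k, Es (k+1) = Es k + η * Δt * (Pc k - Pd k)) :
    ∀ k ≤ T, Er k ≤ E k ∧ E k ≤ Es k :=
  trajectories_ordered_general Δt ηc ηd η E0 T Pc Pd Pcr Pdr E Er Es hΔt hη1 hη2 hnet hcomp hPc hPd
    hPcr hPdr hE0 hEr0 hEs0 hE hEr hEs
end

section
/- With P_c, P_d constructed from relaxed inputs via positive/negative parts of the net power as above, the exact and relaxed SoC trajectories satisfy E[k] − E^r[k] = Δt·(1/η_d − η_c)·Σ_{j<k} min(P_c^r[j], P_d^r[j]) for all k, which is nonnegative when η_c, η_d ∈ (0,1] and the inputs are nonnegative. -/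
/-!
Splitting the relaxed inputs `x, y` into their net parts `max 0 (x - y) = x - min x y` and
`max 0 (y - x) = y - min x y` removes the simultaneous power `min x y` from both channels. At each
step this changes the state-of-charge increment by exactly `Δt (1/ηd - ηc) min x y`, so the gap
between the two trajectories is the running sum of these terms; it is nonnegative because
`ηc ≤ 1 ≤ 1/ηd`.
-/

open Finset

theorem max_zero_sub_eq_sub_min {α : Type*} [AddCommGroup α] [LinearOrder α]
    [IsOrderedAddMonoid α] (x y : α) : max 0 (x - y) = x - min x y := by
  rw [← max_sub_sub_left, sub_self]

theorem sub_eq_sum_range_of_increments {M : Type*} [AddCommGroup M] {u v a b : ℕ → M}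
    (h0 : u 0 = v 0) (hu : ∀ k, u (k + 1) = u k + a k) (hv : ∀ k, v (k + 1) = v k + b k)
    (k : ℕ) : u k - v k = ∑ j ∈ range k, (a j - b j) :=
  (sum_range_induction _ (fun k => u k - v k) (sub_eq_zero.2 h0) k
    fun j _ => by rw [hu, hv]; abel).symm

theorem netted_increment_sub_increment (Δt ηc ηd x y : ℝ) :
    (Δt * ηc * max 0 (x - y) - Δt / ηd * max 0 (-(x - y))) - (Δt * ηc * x - Δt / ηd * y)
      = Δt * (1 / ηd - ηc) * min x y := by
  rw [max_zero_sub_eq_sub_min, neg_sub, max_zero_sub_eq_sub_min, min_comm y x]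
  ring

theorem exact_sub_relaxed_eq_general
    (Δt ηc ηd E0 : ℝ) (Pc Pd Pcr Pdr E Er : ℕ → ℝ)
    (hΔt : 0 < Δt) (hηc1 : ηc ≤ 1)
    (hηd : 0 < ηd) (hηd1 : ηd ≤ 1)
    (hPcr : ∀ k, 0 ≤ Pcr k) (hPdr : ∀ k, 0 ≤ Pdr k)
    (hPc : ∀ k, Pc k = max 0 (Pcr k - Pdr k))
    (hPd : ∀ k, Pd k = max 0 (-(Pcr k - Pdr k)))
    (hE0 : E 0 = E0) (hEr0 : Er 0 = E0)
    (hE : ∀ k, E (k+1) = E k + Δt * ηc * Pc k - (Δt / ηd) * Pd k)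
    (hEr : ∀ k, Er (k+1) = Er k + Δt * ηc * Pcr k - (Δt / ηd) * Pdr k) :
    ∀ k, E k - Er k = Δt * (1 / ηd - ηc) * ∑ j ∈ Finset.range k, min (Pcr j) (Pdr j) ∧
      0 ≤ E k - Er k := by
  intro k
  have hgap : E k - Er k = Δt * (1 / ηd - ηc) * ∑ j ∈ range k, min (Pcr j) (Pdr j) := by
    rw [sub_eq_sum_range_of_increments (hE0.trans hEr0.symm)
      (fun k => (hE k).trans (add_sub_assoc _ _ _))
      (fun k => (hEr k).trans (add_sub_assoc _ _ _)), mul_sum]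
    simp only [hPc, hPd, netted_increment_sub_increment]
  have hcoef : 0 ≤ Δt * (1 / ηd - ηc) :=
    mul_nonneg hΔt.le (sub_nonneg.2 (hηc1.trans (one_le_one_div hηd hηd1)))
  exact ⟨hgap, hgap ▸ mul_nonneg hcoef (sum_nonneg fun j _ => le_min (hPcr j) (hPdr j))⟩

/-- Exact minus relaxed trajectory equals the accumulated simultaneous
charge/discharge, which is nonnegative. -/
theorem exact_sub_relaxed_eq
    (Δt ηc ηd E0 : ℝ) (Pc Pd Pcr Pdr E Er : ℕ → ℝ)
    (hΔt : 0 < Δt) (hηc : 0 < ηc) (hηc1 : ηc ≤ 1)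
    (hηd : 0 < ηd) (hηd1 : ηd ≤ 1)
    (hPcr : ∀ k, 0 ≤ Pcr k) (hPdr : ∀ k, 0 ≤ Pdr k)
    (hPc : ∀ k, Pc k = max 0 (Pcr k - Pdr k))
    (hPd : ∀ k, Pd k = max 0 (-(Pcr k - Pdr k)))
    (hE0 : E 0 = E0) (hEr0 : Er 0 = E0)
    (hE : ∀ k, E (k+1) = E k + Δt * ηc * Pc k - (Δt / ηd) * Pd k)
    (hEr : ∀ k, Er (k+1) = Er k + Δt * ηc * Pcr k - (Δt / ηd) * Pdr k) :
    ∀ k, E k - Er k = Δt * (1 / ηd - ηc) * ∑ j ∈ Finset.range k, min (Pcr j) (Pdr j) ∧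
      0 ≤ E k - Er k :=
  exact_sub_relaxed_eq_general Δt ηc ηd E0 Pc Pd Pcr Pdr E Er hΔt hηc1 hηd hηd1 hPcr hPdr hPc hPd
    hE0 hEr0 hE hEr
end

section
/- If 0 ≤ P_c^r[k], 0 ≤ P_d^r[k], and P_c^r[k] + P_d^r[k] ≤ P_max for all k, then min(P_c^r[k], P_d^r[k]) ≤ P_max/2, and consequently the relaxed-model mismatch satisfies E[k] − E^r[k] ≤ Δt·(1/η_d − η_c)·k·P_max/2 for all k, where η_c,η_d ∈ (0,1]. -/
/-!
The exact model splits the relaxed net power `Pcr - Pdr` into its positive and negative parts,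
which amounts to removing the simultaneous part `min Pcr Pdr` from both the charging and the
discharging power. Each step therefore widens the mismatch by
`Δt * (1 / ηd - ηc) * min Pcr Pdr ≥ 0`, and the cutting plane `Pcr + Pdr ≤ Pmax` caps the
simultaneous part at `Pmax / 2`.
-/

section LinearOrder

variable {α : Type*} [AddCommGroup α] [LinearOrder α] [IsOrderedAddMonoid α]

theorem max_zero_sub_eq_sub_min_s5 (a b : α) : max 0 (a - b) = a - min a b := by
  rw [← max_sub_sub_left, sub_self]

theorem max_zero_neg_sub_eq_sub_min (a b : α) : max 0 (-(a - b)) = b - min a b := by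
  rw [neg_sub, max_zero_sub_eq_sub_min_s5, min_comm]

end LinearOrder

theorem min_le_half_of_add_le {𝕜 : Type*} [Field 𝕜] [LinearOrder 𝕜] [IsStrictOrderedRing 𝕜]
    {a b M : 𝕜} (h : a + b ≤ M) : min a b ≤ M / 2 := by
  linarith [min_le_left a b, min_le_right a b]

theorem netted_sub_gross_eq_mul_min {R : Type*} [CommRing R] [LinearOrder R]
    [IsOrderedRing R] (α β a b : R) :
    (α * max 0 (a - b) - β * max 0 (-(a - b))) - (α * a - β * b) = (β - α) * min a b := by
  rw [max_zero_sub_eq_sub_min_s5, max_zero_neg_sub_eq_sub_min]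
  ring

theorem le_add_nsmul_of_succ_le_add {M : Type*} [AddCommMonoid M] [PartialOrder M]
    [IsOrderedAddMonoid M] {D : ℕ → M} {c : M} (hstep : ∀ k, D (k + 1) ≤ D k + c) (k : ℕ) :
    D k ≤ D 0 + k • c := by
  induction k with
  | zero => simp
  | succ k ih =>
    calc D (k + 1) ≤ D k + c := hstep k
      _ ≤ D 0 + k • c + c := by gcongr
      _ = D 0 + (k + 1) • c := by rw [succ_nsmul, add_assoc]

theorem le_one_div_of_le_one {𝕜 : Type*} [Semifield 𝕜] [LinearOrder 𝕜] [IsStrictOrderedRing 𝕜]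
    {ηc ηd : 𝕜} (hηc1 : ηc ≤ 1) (hηd : 0 < ηd) (hηd1 : ηd ≤ 1) :
    ηc ≤ 1 / ηd :=
  hηc1.trans (one_le_one_div hηd hηd1)

theorem relaxed_mismatch_bound_cutting_plane_general
    (Δt ηc ηd E0 Pmax : ℝ) (Pc Pd Pcr Pdr E Er : ℕ → ℝ)
    (hΔt : 0 < Δt) (hηc1 : ηc ≤ 1)
    (hηd : 0 < ηd) (hηd1 : ηd ≤ 1)
    (hcut : ∀ k, Pcr k + Pdr k ≤ Pmax)
    (hPc : ∀ k, Pc k = max 0 (Pcr k - Pdr k))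
    (hPd : ∀ k, Pd k = max 0 (-(Pcr k - Pdr k)))
    (hE0 : E 0 = E0) (hEr0 : Er 0 = E0)
    (hE : ∀ k, E (k+1) = E k + Δt * ηc * Pc k - (Δt / ηd) * Pd k)
    (hEr : ∀ k, Er (k+1) = Er k + Δt * ηc * Pcr k - (Δt / ηd) * Pdr k) :
    (∀ k, min (Pcr k) (Pdr k) ≤ Pmax / 2) ∧
      ∀ k, E k - Er k ≤ Δt * (1 / ηd - ηc) * k * Pmax / 2 := by
  have hmin k : min (Pcr k) (Pdr k) ≤ Pmax / 2 := min_le_half_of_add_le (hcut k)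
  have hcoeff : 0 ≤ Δt * (1 / ηd - ηc) :=
    mul_nonneg hΔt.le (sub_nonneg.2 (le_one_div_of_le_one hηc1 hηd hηd1))
  have hstep k : E (k + 1) - Er (k + 1)
      = E k - Er k + Δt * (1 / ηd - ηc) * min (Pcr k) (Pdr k) := by
    have := netted_sub_gross_eq_mul_min (Δt * ηc) (Δt / ηd) (Pcr k) (Pdr k)
    rw [hE, hEr, hPc, hPd]
    linear_combination this
  refine ⟨hmin, fun k => ?_⟩
  have hgrowth := le_add_nsmul_of_succ_le_add (D := fun k => E k - Er k)
    (c := Δt * (1 / ηd - ηc) * (Pmax / 2))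
    (fun k => (hstep k).trans_le (by gcongr; exact hmin k)) k
  simp only [hE0, hEr0, sub_self, zero_add, nsmul_eq_mul] at hgrowth
  linarith

/-- With the cutting plane, the relaxed-model mismatch is halved. -/
theorem relaxed_mismatch_bound_cutting_plane
    (Δt ηc ηd E0 Pmax : ℝ) (Pc Pd Pcr Pdr E Er : ℕ → ℝ)
    (hΔt : 0 < Δt) (hηc : 0 < ηc) (hηc1 : ηc ≤ 1)
    (hηd : 0 < ηd) (hηd1 : ηd ≤ 1)
    (hPcr : ∀ k, 0 ≤ Pcr k) (hPdr : ∀ k, 0 ≤ Pdr k)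
    (hcut : ∀ k, Pcr k + Pdr k ≤ Pmax)
    (hPc : ∀ k, Pc k = max 0 (Pcr k - Pdr k))
    (hPd : ∀ k, Pd k = max 0 (-(Pcr k - Pdr k)))
    (hE0 : E 0 = E0) (hEr0 : Er 0 = E0)
    (hE : ∀ k, E (k+1) = E k + Δt * ηc * Pc k - (Δt / ηd) * Pd k)
    (hEr : ∀ k, Er (k+1) = Er k + Δt * ηc * Pcr k - (Δt / ηd) * Pdr k) :
    (∀ k, min (Pcr k) (Pdr k) ≤ Pmax / 2) ∧
      ∀ k, E k - Er k ≤ Δt * (1 / ηd - ηc) * k * Pmax / 2 :=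
  relaxed_mismatch_bound_cutting_plane_general Δt ηc ηd E0 Pmax Pc Pd Pcr Pdr E Er hΔt hηc1 hηd hηd1
    hcut hPc hPd hE0 hEr0 hE hEr
end

section
/- Let η = (η_c + 1/η_d)/2 and α = (1/η_d − η_c)/2. If P_c[k], P_d[k] ≥ 0 and P_c[k]·P_d[k] = 0 for all k, then the simplified-model mismatch satisfies E^s[k] − E[k] = α·Δt·Σ_{j<k} |P_b[j]| where P_b[j] = P_c[j] − P_d[j]. -/
/-! When at most one of `P_c`, `P_d` is nonzero, `|P_c - P_d| = P_c + P_d`. The per-step mismatch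
`η (P_c - P_d) - (η_c P_c - P_d / η_d)` is therefore `α (P_c + P_d) = α |P_c - P_d|`, since `η ∓ α`
recovers `η_c` and `1 / η_d`; summing the telescoping increments of `E^s - E` gives the claim. -/

theorem abs_sub_eq_add_of_mul_eq_zero {R : Type*} [Ring R] [LinearOrder R] [IsStrictOrderedRing R]
    {c d : R} (hc : 0 ≤ c) (hd : 0 ≤ d) (hcd : c * d = 0) : |c - d| = c + d := by
  rcases mul_eq_zero.mp hcd with rfl | rfl
  · rw [zero_sub, abs_neg, abs_of_nonneg hd, zero_add]
  · rw [sub_zero, abs_of_nonneg hc, add_zero]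

theorem midpoint_mul_sub_sub_eq_mul_abs (a b Δt c d : ℝ) (hc : 0 ≤ c) (hd : 0 ≤ d)
    (hcd : c * d = 0) :
    (a + b) / 2 * Δt * (c - d) - (Δt * a * c - Δt * b * d) = (b - a) / 2 * Δt * |c - d| := by
  rw [abs_sub_eq_add_of_mul_eq_zero hc hd hcd]
  ring

theorem simplified_mismatch_eq_general
    (Δt ηc ηd E0 : ℝ) (Pc Pd E Es : ℕ → ℝ)
    (hPc : ∀ k, 0 ≤ Pc k) (hPd : ∀ k, 0 ≤ Pd k)
    (hcomp : ∀ k, Pc k * Pd k = 0)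
    (hE0 : E 0 = E0) (hEs0 : Es 0 = E0)
    (hE : ∀ k, E (k+1) = E k + Δt * ηc * Pc k - (Δt / ηd) * Pd k)
    (hEs : ∀ k, Es (k+1) = Es k + ((ηc + 1 / ηd) / 2) * Δt * (Pc k - Pd k)) :
    ∀ k, Es k - E k =
      ((1 / ηd - ηc) / 2) * Δt * ∑ j ∈ Finset.range k, |Pc j - Pd j| := by
  have step (j : ℕ) : (Es (j + 1) - E (j + 1)) - (Es j - E j) =
      (1 / ηd - ηc) / 2 * Δt * |Pc j - Pd j| := by
    rw [hE, hEs, ← midpoint_mul_sub_sub_eq_mul_abs ηc (1 / ηd) Δt _ _ (hPc j) (hPd j) (hcomp j)]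
    ring
  intro k
  rw [Finset.mul_sum, ← Finset.sum_congr rfl fun j _ ↦ step j,
    Finset.sum_range_sub (fun j ↦ Es j - E j), hE0, hEs0, sub_self, sub_zero]

/-- Simplified-model mismatch under the midpoint efficiency choice. -/
theorem simplified_mismatch_eq
    (Δt ηc ηd E0 : ℝ) (Pc Pd E Es : ℕ → ℝ)
    (hΔt : 0 < Δt) (hηc : 0 < ηc) (hηc1 : ηc ≤ 1)
    (hηd : 0 < ηd) (hηd1 : ηd ≤ 1)
    (hPc : ∀ k, 0 ≤ Pc k) (hPd : ∀ k, 0 ≤ Pd k)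
    (hcomp : ∀ k, Pc k * Pd k = 0)
    (hE0 : E 0 = E0) (hEs0 : Es 0 = E0)
    (hE : ∀ k, E (k+1) = E k + Δt * ηc * Pc k - (Δt / ηd) * Pd k)
    (hEs : ∀ k, Es (k+1) = Es k + ((ηc + 1 / ηd) / 2) * Δt * (Pc k - Pd k)) :
    ∀ k, Es k - E k =
      ((1 / ηd - ηc) / 2) * Δt * ∑ j ∈ Finset.range k, |Pc j - Pd j| :=
  simplified_mismatch_eq_general Δt ηc ηd E0 Pc Pd E Es hPc hPd hcomp hE0 hEs0 hE hEs
end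

section
/- Under the hypotheses of the previous statement, if additionally |P_b[k]| ≤ P_max for all k, then E^s[k] − E[k] ≤ (1/η_d − η_c)·Δt·k·P_max/2 for all k. -/
/-!
The gap `Es - E` starts at `0` and, by complementarity, grows at step `k` by exactly
`(1/ηd - ηc)/2 · Δt · (Pc k + Pd k) = (1/ηd - ηc)/2 · Δt · |Pc k - Pd k|`: the averaged efficiency
over-credits charging by `(1/ηd - ηc)/2` and under-debits discharging by the same amount.
Summing the per-step bound `(1/ηd - ηc)/2 · Δt · Pmax` over `k` steps gives the claim.
-/

theorem le_add_nsmul_of_le_add {α : Type*} [AddCommMonoid α] [PartialOrder α]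
    [IsOrderedAddMonoid α] {u : ℕ → α} {c : α} (hu : ∀ k, u (k + 1) ≤ u k + c) :
    ∀ k, u k ≤ u 0 + k • c
  | 0 => by simp
  | k + 1 => by
    calc u (k + 1) ≤ u k + c := hu k
      _ ≤ u 0 + k • c + c := by grw [le_add_nsmul_of_le_add hu k]
      _ = u 0 + (k + 1) • c := by rw [succ_nsmul, add_assoc]

theorem add_eq_abs_sub_of_eq_zero_or_eq_zero {α : Type*} [AddCommGroup α] [LinearOrder α]
    [IsOrderedAddMonoid α] {a b : α} (ha : 0 ≤ a) (hb : 0 ≤ b) (hab : a = 0 ∨ b = 0) :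
    a + b = |a - b| := by
  rcases hab with rfl | rfl
  · simp [abs_of_nonneg hb]
  · simp [abs_of_nonneg ha]

theorem one_div_sub_nonneg_of_le_one {a b : ℝ} (ha : 0 < a) (ha1 : a ≤ 1) (hb1 : b ≤ 1) :
    0 ≤ 1 / a - b := by
  have : 1 ≤ 1 / a := by rw [le_div_iff₀ ha]; linarith
  linarith

theorem simplified_mismatch_bound_general
    (Δt ηc ηd E0 Pmax : ℝ) (Pc Pd E Es : ℕ → ℝ)
    (hΔt : 0 < Δt) (hηc1 : ηc ≤ 1)
    (hηd : 0 < ηd) (hηd1 : ηd ≤ 1)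
    (hPc : ∀ k, 0 ≤ Pc k) (hPd : ∀ k, 0 ≤ Pd k)
    (hcomp : ∀ k, Pc k * Pd k = 0)
    (hPb : ∀ k, |Pc k - Pd k| ≤ Pmax)
    (hE0 : E 0 = E0) (hEs0 : Es 0 = E0)
    (hE : ∀ k, E (k+1) = E k + Δt * ηc * Pc k - (Δt / ηd) * Pd k)
    (hEs : ∀ k, Es (k+1) = Es k + ((ηc + 1 / ηd) / 2) * Δt * (Pc k - Pd k)) :
    ∀ k, Es k - E k ≤ (1 / ηd - ηc) * Δt * k * Pmax / 2 := by
  set c := (1 / ηd - ηc) / 2 * Δt with hc_def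
  have hc : 0 ≤ c := by
    have := one_div_sub_nonneg_of_le_one hηd hηd1 hηc1
    positivity
  have hgap_succ (k : ℕ) : Es (k + 1) - E (k + 1) = (Es k - E k) + c * (Pc k + Pd k) := by
    rw [hE k, hEs k, hc_def]
    field_simp
    ring
  have hstep (k : ℕ) : Es (k + 1) - E (k + 1) ≤ (Es k - E k) + c * Pmax := by
    rw [hgap_succ, add_eq_abs_sub_of_eq_zero_or_eq_zero (hPc k) (hPd k)
      (mul_eq_zero.mp (hcomp k))]
    gcongr
    exact hPb k
  intro k
  calc Es k - E k ≤ (Es 0 - E 0) + k • (c * Pmax) :=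
        le_add_nsmul_of_le_add (u := fun k ↦ Es k - E k) hstep k
    _ = (1 / ηd - ηc) * Δt * k * Pmax / 2 := by
      rw [hE0, hEs0, nsmul_eq_mul]
      ring

/-- Worst-case simplified-model mismatch bound. -/
theorem simplified_mismatch_bound
    (Δt ηc ηd E0 Pmax : ℝ) (Pc Pd E Es : ℕ → ℝ)
    (hΔt : 0 < Δt) (hηc : 0 < ηc) (hηc1 : ηc ≤ 1)
    (hηd : 0 < ηd) (hηd1 : ηd ≤ 1)
    (hPc : ∀ k, 0 ≤ Pc k) (hPd : ∀ k, 0 ≤ Pd k)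
    (hcomp : ∀ k, Pc k * Pd k = 0)
    (hPb : ∀ k, |Pc k - Pd k| ≤ Pmax)
    (hE0 : E 0 = E0) (hEs0 : Es 0 = E0)
    (hE : ∀ k, E (k+1) = E k + Δt * ηc * Pc k - (Δt / ηd) * Pd k)
    (hEs : ∀ k, Es (k+1) = Es k + ((ηc + 1 / ηd) / 2) * Δt * (Pc k - Pd k)) :
    ∀ k, Es k - E k ≤ (1 / ηd - ηc) * Δt * k * Pmax / 2 :=
  simplified_mismatch_bound_general Δt ηc ηd E0 Pmax Pc Pd E Es hΔt hηc1 hηd hηd1 hPc hPd hcomp hPb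
    hE0 hEs0 hE hEs
end

section
/- Let Δ[k] = E^s[k] − E^r[k] be the gap between the simplified upper-bound trajectory and the relaxed lower-bound trajectory driven by the same inputs P_c, P_d ≥ 0 with η = (η_c + 1/η_d)/2 and complementarity P_c[k]·P_d[k]=0. Then Δ[k] = α·Δt·Σ_{j<k}|P_b[j]| + Δt·(1/η_d − η_c)·Σ_{j<k} min(P_c[j],P_d[j]) = α·Δt·Σ_{j<k}|P_b[j]| (the second term vanishes under complementarity), where α = (1/η_d−η_c)/2. -/
/-!
With `η` the midpoint of `ηc` and `1 / ηd`, each step widens the gap by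
`(1 / ηd - ηc) / 2 · Δt · (Pc + Pd)`, whatever the signs of the inputs. Splitting
`Pc + Pd = |Pc - Pd| + 2 min Pc Pd` gives the first formula; complementarity of
nonnegative inputs kills the `min` term.
-/

open Finset

lemma add_eq_abs_sub_add_two_mul_min {α : Type*} [AddCommGroup α] [LinearOrder α]
    [IsOrderedAddMonoid α] (a b : α) : a + b = |a - b| + 2 • min a b := by
  rw [← max_sub_min_eq_abs', two_nsmul, ← min_add_max a b]
  abel

lemma min_eq_zero_of_mul_eq_zero {α : Type*} [MulZeroClass α] [NoZeroDivisors α] [LinearOrder α]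
    {a b : α} (ha : 0 ≤ a) (hb : 0 ≤ b) (h : a * b = 0) : min a b = 0 := by
  rcases mul_eq_zero.mp h with rfl | rfl
  · exact min_eq_left hb
  · exact min_eq_right ha

lemma sub_eq_sum_of_midpoint_efficiency (Δt ηc ηd E0 : ℝ) (Pc Pd Es Er : ℕ → ℝ)
    (hEs0 : Es 0 = E0) (hEr0 : Er 0 = E0)
    (hEs : ∀ k, Es (k+1) = Es k + ((ηc + 1 / ηd) / 2) * Δt * (Pc k - Pd k))
    (hEr : ∀ k, Er (k+1) = Er k + Δt * ηc * Pc k - (Δt / ηd) * Pd k) (k : ℕ) :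
    Es k - Er k = ((1 / ηd - ηc) / 2) * Δt * ∑ j ∈ range k, (Pc j + Pd j) := by
  induction k with
  | zero => simp [hEs0, hEr0]
  | succ n ih =>
    rw [hEs n, hEr n, sum_range_succ]
    linear_combination ih

theorem simplified_relaxed_gap_general
    (Δt ηc ηd E0 : ℝ) (Pc Pd Es Er : ℕ → ℝ)
    (hPc : ∀ k, 0 ≤ Pc k) (hPd : ∀ k, 0 ≤ Pd k)
    (hcomp : ∀ k, Pc k * Pd k = 0)
    (hEs0 : Es 0 = E0) (hEr0 : Er 0 = E0)
    (hEs : ∀ k, Es (k+1) = Es k + ((ηc + 1 / ηd) / 2) * Δt * (Pc k - Pd k))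
    (hEr : ∀ k, Er (k+1) = Er k + Δt * ηc * Pc k - (Δt / ηd) * Pd k) :
    ∀ k, Es k - Er k =
        ((1 / ηd - ηc) / 2) * Δt * (∑ j ∈ Finset.range k, |Pc j - Pd j|) +
          Δt * (1 / ηd - ηc) * (∑ j ∈ Finset.range k, min (Pc j) (Pd j)) ∧
      Es k - Er k = ((1 / ηd - ηc) / 2) * Δt * ∑ j ∈ Finset.range k, |Pc j - Pd j| := by
  intro k
  have hgap := sub_eq_sum_of_midpoint_efficiency Δt ηc ηd E0 Pc Pd Es Er hEs0 hEr0 hEs hEr k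
  have hsplit : ∑ j ∈ range k, (Pc j + Pd j) =
      ∑ j ∈ range k, |Pc j - Pd j| + 2 * ∑ j ∈ range k, min (Pc j) (Pd j) := by
    rw [mul_sum, ← sum_add_distrib]
    refine sum_congr rfl fun j _ => ?_
    rw [add_eq_abs_sub_add_two_mul_min, nsmul_eq_mul, Nat.cast_ofNat]
  have hmin : ∑ j ∈ range k, min (Pc j) (Pd j) = 0 :=
    sum_eq_zero fun j _ => min_eq_zero_of_mul_eq_zero (hPc j) (hPd j) (hcomp j)
  constructor
  · rw [hgap, hsplit]
    ring
  · rw [hgap, hsplit, hmin]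
    ring

/-- Gap between the simplified upper bound and the relaxed lower bound. -/
theorem simplified_relaxed_gap
    (Δt ηc ηd E0 : ℝ) (Pc Pd Es Er : ℕ → ℝ)
    (hΔt : 0 < Δt) (hηc : 0 < ηc) (hηc1 : ηc ≤ 1)
    (hηd : 0 < ηd) (hηd1 : ηd ≤ 1)
    (hPc : ∀ k, 0 ≤ Pc k) (hPd : ∀ k, 0 ≤ Pd k)
    (hcomp : ∀ k, Pc k * Pd k = 0)
    (hEs0 : Es 0 = E0) (hEr0 : Er 0 = E0)
    (hEs : ∀ k, Es (k+1) = Es k + ((ηc + 1 / ηd) / 2) * Δt * (Pc k - Pd k))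
    (hEr : ∀ k, Er (k+1) = Er k + Δt * ηc * Pc k - (Δt / ηd) * Pd k) :
    ∀ k, Es k - Er k =
        ((1 / ηd - ηc) / 2) * Δt * (∑ j ∈ Finset.range k, |Pc j - Pd j|) +
          Δt * (1 / ηd - ηc) * (∑ j ∈ Finset.range k, min (Pc j) (Pd j)) ∧
      Es k - Er k = ((1 / ηd - ηc) / 2) * Δt * ∑ j ∈ Finset.range k, |Pc j - Pd j| :=
  simplified_relaxed_gap_general Δt ηc ηd E0 Pc Pd Es Er hPc hPd hcomp hEs0 hEr0 hEs hEr
end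

section
/- If P_c^r[k], P_d^r[k] ∈ [0, P_max], then (without the cutting plane) min(P_c^r[k], P_d^r[k]) ≤ P_max, hence the relaxed-model mismatch obeys E[k] − E^r[k] ≤ Δt·(1/η_d − η_c)·k·P_max; adding the constraint P_c^r[k]+P_d^r[k] ≤ P_max halves this bound to Δt·(1/η_d − η_c)·k·P_max/2. -/
/-!
Splitting the relaxed net power `x - y` into its positive and negative parts removes the
simultaneous charge/discharge `min x y` from both sides, and each such unit of power costs the
relaxed model `(b - a) * min x y` of stored energy, where `a` and `b` are the charging and
discharging conversion factors. The mismatch is therefore `(b - a)` times the accumulated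
simultaneous power, and it is bounded by bounding `min x y` termwise: by `Pmax` in general, and by
`Pmax / 2` under the cutting plane `x + y ≤ Pmax`.
-/

open Finset

lemma mul_posPart_sub_mul_negPart (a b x y : ℝ) :
    a * max 0 (x - y) - b * max 0 (-(x - y)) = a * x - b * y + (b - a) * min x y := by
  rcases le_total x y with h | h
  · rw [min_eq_left h, max_eq_left (by linarith), max_eq_right (by linarith)]
    ring
  · rw [min_eq_right h, max_eq_right (by linarith), max_eq_left (by linarith)]
    ring

lemma min_le_add_div_two (x y : ℝ) : min x y ≤ (x + y) / 2 := by
  rcases le_total x y with h | h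
  · rw [min_eq_left h]; linarith
  · rw [min_eq_right h]; linarith

section Mismatch

variable {a b : ℝ} {x y u v E Er : ℕ → ℝ}

lemma sub_eq_mul_sum_min (h0 : E 0 = Er 0)
    (hu : ∀ k, u k = max 0 (x k - y k)) (hv : ∀ k, v k = max 0 (-(x k - y k)))
    (hE : ∀ k, E (k + 1) = E k + a * u k - b * v k)
    (hEr : ∀ k, Er (k + 1) = Er k + a * x k - b * y k) (k : ℕ) :
    E k - Er k = (b - a) * ∑ j ∈ range k, min (x j) (y j) := by
  induction k with
  | zero => simp [h0]
  | succ n ih =>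
    have step := mul_posPart_sub_mul_negPart a b (x n) (y n)
    rw [hE, hEr, hu, hv, sum_range_succ]
    linear_combination ih + step

lemma sub_le_mul_of_min_le {c : ℝ} (hab : a ≤ b) (hmin : ∀ j, min (x j) (y j) ≤ c)
    (h0 : E 0 = Er 0)
    (hu : ∀ k, u k = max 0 (x k - y k)) (hv : ∀ k, v k = max 0 (-(x k - y k)))
    (hE : ∀ k, E (k + 1) = E k + a * u k - b * v k)
    (hEr : ∀ k, Er (k + 1) = Er k + a * x k - b * y k) (k : ℕ) :
    E k - Er k ≤ (b - a) * k * c := by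
  have hsum : ∑ j ∈ range k, min (x j) (y j) ≤ k * c := by
    simpa using sum_le_card_nsmul (range k) _ c fun j _ => hmin j
  rw [sub_eq_mul_sum_min h0 hu hv hE hEr, mul_assoc]
  exact mul_le_mul_of_nonneg_left hsum (sub_nonneg.mpr hab)

end Mismatch

theorem relaxed_mismatch_bounds_general
    (Δt ηc ηd E0 Pmax : ℝ) (Pc Pd Pcr Pdr E Er : ℕ → ℝ)
    (hΔt : 0 < Δt) (hηc1 : ηc ≤ 1)
    (hηd : 0 < ηd) (hηd1 : ηd ≤ 1)
    (hPcr' : ∀ k, Pcr k ≤ Pmax)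
    (hPc : ∀ k, Pc k = max 0 (Pcr k - Pdr k))
    (hPd : ∀ k, Pd k = max 0 (-(Pcr k - Pdr k)))
    (hE0 : E 0 = E0) (hEr0 : Er 0 = E0)
    (hE : ∀ k, E (k+1) = E k + Δt * ηc * Pc k - (Δt / ηd) * Pd k)
    (hEr : ∀ k, Er (k+1) = Er k + Δt * ηc * Pcr k - (Δt / ηd) * Pdr k) :
    (∀ k, min (Pcr k) (Pdr k) ≤ Pmax) ∧
    (∀ k, E k - Er k ≤ Δt * (1 / ηd - ηc) * k * Pmax) ∧
    ((∀ k, Pcr k + Pdr k ≤ Pmax) →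
      ∀ k, E k - Er k ≤ Δt * (1 / ηd - ηc) * k * Pmax / 2) := by
  have hcoef : Δt * (1 / ηd - ηc) = Δt / ηd - Δt * ηc := by ring
  have hab : Δt * ηc ≤ Δt / ηd :=
    calc Δt * ηc ≤ Δt := mul_le_of_le_one_right hΔt.le hηc1
      _ ≤ Δt / ηd := le_div_self hΔt.le hηd hηd1
  have h0 : E 0 = Er 0 := hE0.trans hEr0.symm
  have hmin : ∀ k, min (Pcr k) (Pdr k) ≤ Pmax := fun k => (min_le_left _ _).trans (hPcr' k)
  refine ⟨hmin, fun k => ?_, fun hcut k => ?_⟩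
  · rw [hcoef]
    exact sub_le_mul_of_min_le hab hmin h0 hPc hPd hE hEr k
  · have hmin_half : ∀ j, min (Pcr j) (Pdr j) ≤ Pmax / 2 := fun j =>
      (min_le_add_div_two _ _).trans (by linarith [hcut j])
    rw [hcoef, mul_div_assoc]
    exact sub_le_mul_of_min_le hab hmin_half h0 hPc hPd hE hEr k

/-- Relaxed-model mismatch bounds, without and with the cutting plane. -/
theorem relaxed_mismatch_bounds
    (Δt ηc ηd E0 Pmax : ℝ) (Pc Pd Pcr Pdr E Er : ℕ → ℝ)
    (hΔt : 0 < Δt) (hηc : 0 < ηc) (hηc1 : ηc ≤ 1)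
    (hηd : 0 < ηd) (hηd1 : ηd ≤ 1) (hPmax : 0 ≤ Pmax)
    (hPcr : ∀ k, 0 ≤ Pcr k) (hPcr' : ∀ k, Pcr k ≤ Pmax)
    (hPdr : ∀ k, 0 ≤ Pdr k) (hPdr' : ∀ k, Pdr k ≤ Pmax)
    (hPc : ∀ k, Pc k = max 0 (Pcr k - Pdr k))
    (hPd : ∀ k, Pd k = max 0 (-(Pcr k - Pdr k)))
    (hE0 : E 0 = E0) (hEr0 : Er 0 = E0)
    (hE : ∀ k, E (k+1) = E k + Δt * ηc * Pc k - (Δt / ηd) * Pd k)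
    (hEr : ∀ k, Er (k+1) = Er k + Δt * ηc * Pcr k - (Δt / ηd) * Pdr k) :
    (∀ k, min (Pcr k) (Pdr k) ≤ Pmax) ∧
    (∀ k, E k - Er k ≤ Δt * (1 / ηd - ηc) * k * Pmax) ∧
    ((∀ k, Pcr k + Pdr k ≤ Pmax) →
      ∀ k, E k - Er k ≤ Δt * (1 / ηd - ηc) * k * Pmax / 2) :=
  relaxed_mismatch_bounds_general Δt ηc ηd E0 Pmax Pc Pd Pcr Pdr E Er hΔt hηc1 hηd hηd1 hPcr' hPc
    hPd hE0 hEr0 hE hEr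
end

section
/- If simultaneous charging and discharging occurs at some step j < k (i.e., min(P_c^r[j], P_d^r[j]) > 0) and η_c·η_d < 1, then the relaxed trajectory strictly underestimates the exact one at time k: E^r[k] < E[k]. -/
/-!
Netting the relaxed powers `(a, b)` to `(max 0 (a - b), max 0 (b - a))` removes `min a b` from
both the charging and the discharging side; per unit of time this gains `ηc * min a b` on the
charging side and saves `min a b / ηd` on the discharging side, so each step widens the gap
`E - Er` by `Δt * (1 / ηd - ηc) * min a b`, which is positive when `ηc * ηd < 1`.
-/

open Finset

lemma netted_step_eq (Δt ηc ηd a b : ℝ) :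
    Δt * ηc * max 0 (a - b) - Δt / ηd * max 0 (-(a - b)) =
      Δt * ηc * a - Δt / ηd * b + Δt * (1 / ηd - ηc) * min a b := by
  rcases le_total b a with hba | hab
  · rw [max_eq_right (by linarith), max_eq_left (by linarith), min_eq_right hba]
    ring
  · rw [max_eq_left (by linarith), max_eq_right (by linarith), min_eq_left hab]
    ring

lemma exact_sub_relaxed_eq_sum (Δt ηc ηd E0 : ℝ) (Pc Pd Pcr Pdr E Er : ℕ → ℝ)
    (hPc : ∀ k, Pc k = max 0 (Pcr k - Pdr k))
    (hPd : ∀ k, Pd k = max 0 (-(Pcr k - Pdr k)))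
    (hE0 : E 0 = E0) (hEr0 : Er 0 = E0)
    (hE : ∀ k, E (k+1) = E k + Δt * ηc * Pc k - (Δt / ηd) * Pd k)
    (hEr : ∀ k, Er (k+1) = Er k + Δt * ηc * Pcr k - (Δt / ηd) * Pdr k) (n : ℕ) :
    E n - Er n = Δt * (1 / ηd - ηc) * ∑ i ∈ range n, min (Pcr i) (Pdr i) := by
  have hstep : ∀ i, (E (i+1) - Er (i+1)) - (E i - Er i) =
      Δt * (1 / ηd - ηc) * min (Pcr i) (Pdr i) := by
    intro i
    have := netted_step_eq Δt ηc ηd (Pcr i) (Pdr i)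
    rw [hE, hEr, hPc, hPd]
    linarith
  have htelescope := sum_range_sub (fun i => E i - Er i) n
  simp only [hstep, hE0, hEr0, sub_self, ← mul_sum] at htelescope
  linarith

theorem relaxed_strictly_below_general
    (Δt ηc ηd E0 : ℝ) (Pc Pd Pcr Pdr E Er : ℕ → ℝ) (k j : ℕ)
    (hΔt : 0 < Δt)
    (hηd : 0 < ηd) (hrt : ηc * ηd < 1)
    (hPcr : ∀ k, 0 ≤ Pcr k) (hPdr : ∀ k, 0 ≤ Pdr k)
    (hPc : ∀ k, Pc k = max 0 (Pcr k - Pdr k))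
    (hPd : ∀ k, Pd k = max 0 (-(Pcr k - Pdr k)))
    (hE0 : E 0 = E0) (hEr0 : Er 0 = E0)
    (hE : ∀ k, E (k+1) = E k + Δt * ηc * Pc k - (Δt / ηd) * Pd k)
    (hEr : ∀ k, Er (k+1) = Er k + Δt * ηc * Pcr k - (Δt / ηd) * Pdr k)
    (hjk : j < k) (hscd : 0 < min (Pcr j) (Pdr j)) :
    Er k < E k := by
  have hgap : 0 < 1 / ηd - ηc := by
    rw [sub_pos, lt_div_iff₀ hηd]
    exact hrt
  have hsum : 0 < ∑ i ∈ range k, min (Pcr i) (Pdr i) :=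
    sum_pos' (fun i _ => le_min (hPcr i) (hPdr i)) ⟨j, mem_range.mpr hjk, hscd⟩
  have hdiff := exact_sub_relaxed_eq_sum Δt ηc ηd E0 Pc Pd Pcr Pdr E Er hPc hPd hE0 hEr0 hE hEr k
  exact sub_pos.mp (hdiff ▸ mul_pos (mul_pos hΔt hgap) hsum)

/-- Strict underestimation under simultaneous charging and discharging. -/
theorem relaxed_strictly_below
    (Δt ηc ηd E0 : ℝ) (Pc Pd Pcr Pdr E Er : ℕ → ℝ) (k j : ℕ)
    (hΔt : 0 < Δt) (hηc : 0 < ηc) (hηc1 : ηc ≤ 1)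
    (hηd : 0 < ηd) (hηd1 : ηd ≤ 1) (hrt : ηc * ηd < 1)
    (hPcr : ∀ k, 0 ≤ Pcr k) (hPdr : ∀ k, 0 ≤ Pdr k)
    (hPc : ∀ k, Pc k = max 0 (Pcr k - Pdr k))
    (hPd : ∀ k, Pd k = max 0 (-(Pcr k - Pdr k)))
    (hE0 : E 0 = E0) (hEr0 : Er 0 = E0)
    (hE : ∀ k, E (k+1) = E k + Δt * ηc * Pc k - (Δt / ηd) * Pd k)
    (hEr : ∀ k, Er (k+1) = Er k + Δt * ηc * Pcr k - (Δt / ηd) * Pdr k)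
    (hjk : j < k) (hscd : 0 < min (Pcr j) (Pdr j)) :
    Er k < E k :=
  relaxed_strictly_below_general Δt ηc ηd E0 Pc Pd Pcr Pdr E Er k j hΔt hηd hrt hPcr hPdr hPc hPd
    hE0 hEr0 hE hEr hjk hscd
end
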